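/- Let S be a nonempty set and b : S → ℝ^n a map with b_i(X) > 0 for all X ∈ S and all i, and let G = ∪_{X ∈ S} [0, b(X)]. Let z ∈ ℝ^n with z_i > 0 for all i, and suppose the set { min_{1≤i≤n} b_i(X)/z_i : X ∈ S } is bounded above. Then sup { α ≥ 0 : α·z ∈ G } = sup_{X ∈ S} min_{1≤i≤n} b_i(X)/z_i; that is, the projection of z along the halfline from the origin onto the upper boundary of G is determined by an extended max-min problem. -/

import Mathlib

/-!
A point `α • z` with `α ≥ 0` lies in the box `[0, b X]` exactly when `α ≤ min_i b_i(X) / z_i`.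
So the admissible `α` and the values `min_i b_i(X) / z_i` dominate each other, and two sets of
reals that dominate each other have the same supremum (also in the unbounded case, where
both junk values are `0`).
-/

/-- The minimum of a finite family of reals indexed by `Fin n`, `n > 0`. -/
noncomputable def minOver {n : ℕ} (hn : 0 < n) (v : Fin n → ℝ) : ℝ :=
  Finset.univ.inf' (Finset.univ_nonempty_iff.mpr (Fin.pos_iff_nonempty.mp hn)) v

section minOver

variable {n : ℕ} (hn : 0 < n)

lemma le_minOver_iff {α : ℝ} {v : Fin n → ℝ} : α ≤ minOver hn v ↔ ∀ i, α ≤ v i := by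
  simp [minOver, Finset.le_inf'_iff]

lemma minOver_nonneg {v : Fin n → ℝ} (hv : ∀ i, 0 ≤ v i) : 0 ≤ minOver hn v :=
  (le_minOver_iff hn).2 hv

lemma smul_le_iff_le_minOver_div {α : ℝ} {b z : Fin n → ℝ} (hz : ∀ i, 0 < z i) :
    α • z ≤ b ↔ α ≤ minOver hn fun i => b i / z i := by
  simp only [le_minOver_iff, Pi.le_def, Pi.smul_apply, smul_eq_mul, le_div_iff₀ (hz _)]

lemma smul_mem_Icc_iff_le_minOver_div {α : ℝ} {b z : Fin n → ℝ} (hz : ∀ i, 0 < z i)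
    (hα : 0 ≤ α) : α • z ∈ Set.Icc 0 b ↔ α ≤ minOver hn fun i => b i / z i :=
  ⟨fun h => (smul_le_iff_le_minOver_div hn hz).1 h.2,
    fun h => ⟨smul_nonneg hα fun i => (hz i).le, (smul_le_iff_le_minOver_div hn hz).2 h⟩⟩

end minOver

theorem stmt5_general {n : ℕ} (hn : 0 < n) {S : Type*}
    (b : S → Fin n → ℝ) (hb : ∀ X i, 0 < b X i)
    (z : Fin n → ℝ) (hz : ∀ i, 0 < z i) :
    sSup {α : ℝ | 0 ≤ α ∧ α • z ∈ ⋃ X : S, Set.Icc (0 : Fin n → ℝ) (b X)} =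
      ⨆ X : S, minOver hn fun i => b X i / z i := by
  refine csSup_eq_csSup_of_forall_exists_le ?_ ?_
  · rintro α ⟨hα, hαG⟩
    obtain ⟨X, hX⟩ := Set.mem_iUnion.1 hαG
    exact ⟨_, ⟨X, rfl⟩, (smul_mem_Icc_iff_le_minOver_div hn hz hα).1 hX⟩
  · rintro _ ⟨X, rfl⟩
    have hm : 0 ≤ minOver hn fun i => b X i / z i :=
      minOver_nonneg hn fun i => (div_pos (hb X i) (hz i)).le
    exact ⟨_, ⟨hm, Set.mem_iUnion.2 ⟨X, (smul_mem_Icc_iff_le_minOver_div hn hz hm).2 le_rfl⟩⟩,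
      le_rfl⟩

/-- The projection of `z` (with strictly positive coordinates) along the halfline from the
origin onto the upper boundary of the union of boxes `G = ⋃_X [0, b(X)]` is determined by an
extended max-min problem: `sup {α ≥ 0 : α • z ∈ G} = sup_X min_i b_i(X) / z_i`. -/
theorem stmt5 {n : ℕ} (hn : 0 < n) {S : Type*} [Nonempty S]
    (b : S → Fin n → ℝ) (hb : ∀ X i, 0 < b X i)
    (z : Fin n → ℝ) (hz : ∀ i, 0 < z i)
    (hbdd : BddAbove (Set.range fun X : S => minOver hn fun i => b X i / z i)) :
    sSup {α : ℝ | 0 ≤ α ∧ α • z ∈ ⋃ X : S, Set.Icc (0 : Fin n → ℝ) (b X)} =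
      ⨆ X : S, minOver hn fun i => b X i / z i :=
  stmt5_general hn b hb z hz
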